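/- arXiv:0910.1746 — 2 statements merged into one kernel-verified Lean document; each statement's English description precedes it below -/
import Mathlib

section
/- The Al-Salam-Carlitz polynomial U_n(x,y,a;q), defined as the sum over k from 0 to n of [n choose k]_q (-1)^k q^(k choose 2) a^k P_{n-k}(x,y), is symmetric in a and y; that is, U_n(x,y,a;q) = U_n(x,a,y;q). -/
/-!
Expanding each Cauchy polynomial by the Gauss q-binomial theorem
`P_m(x, y) = ∑ⱼ [m choose j]_q (-1)^j q^(j choose 2) y^j x^(m-j)` turns `U_n(x, y, a)` into a
double sum over `k + j ≤ n` of `[n choose k]_q [n-k choose j]_q (-1)^(k+j) q^(k choose 2 + j choose 2)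
a^k y^j x^(n-k-j)`. The q-trinomial coefficient `[n choose k]_q [n-k choose j]_q =
(q;q)_n / ((q;q)_k (q;q)_j (q;q)_(n-k-j))` is symmetric in `k` and `j`, so the double sum is
symmetric in `a` and `y`.
-/

open Finset

noncomputable def qPoch (q a : ℂ) (n : ℕ) : ℂ := ∏ j ∈ Finset.range n, (1 - a * q ^ j)

noncomputable def qPochInf (q a : ℂ) : ℂ := ∏' j : ℕ, (1 - a * q ^ j)

noncomputable def qBinom (q : ℂ) (n k : ℕ) : ℂ := qPoch q q n / (qPoch q q (n - k) * qPoch q q k)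

noncomputable def cauchyP (q x y : ℂ) (n : ℕ) : ℂ := ∏ j ∈ Finset.range n, (x - q ^ j * y)

noncomputable def ascU (q x y a : ℂ) (n : ℕ) : ℂ :=
  ∑ k ∈ Finset.range (n + 1), qBinom q n k * (-1) ^ k * q ^ Nat.choose k 2 * a ^ k * cauchyP q x y (n - k)

theorem Finset.sum_range_sub_sum_range_eq_sum_range_succ {M : Type*} [AddCommGroup M]
    (f g s : ℕ → M) (m : ℕ) (h0 : g 0 = f 0) (hsucc : ∀ j < m, g (j + 1) = f (j + 1) - s j)
    (htop : g (m + 1) = -s m) :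
    ∑ j ∈ range (m + 1), f j - ∑ j ∈ range (m + 1), s j = ∑ j ∈ range (m + 2), g j := by
  rw [sum_range_succ' f, sum_range_succ s, sum_range_succ g (m + 1), sum_range_succ' g,
    sum_congr rfl fun j hj => hsucc j (mem_range.mp hj), sum_sub_distrib, h0, htop]
  abel

theorem Finset.sum_range_sum_range_sub_comm {M : Type*} [AddCommMonoid M] (f : ℕ → ℕ → M)
    (n : ℕ) :
    ∑ k ∈ range (n + 1), ∑ j ∈ range (n - k + 1), f k j
      = ∑ j ∈ range (n + 1), ∑ k ∈ range (n - j + 1), f k j :=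
  sum_comm' fun k j => by simp only [mem_range]; omega

theorem cauchyP_succ (q x y : ℂ) (m : ℕ) :
    cauchyP q x y (m + 1) = cauchyP q x y m * (x - q ^ m * y) :=
  prod_range_succ _ m

theorem qPoch_zero (q a : ℂ) : qPoch q a 0 = 1 :=
  prod_range_zero _

theorem qPoch_self_succ (q : ℂ) (n : ℕ) :
    qPoch q q (n + 1) = qPoch q q n * (1 - q ^ (n + 1)) := by
  rw [qPoch, prod_range_succ, ← qPoch, ← pow_succ']

theorem qPoch_self_ne_zero {q : ℂ} (hq : ‖q‖ < 1) (n : ℕ) : qPoch q q n ≠ 0 := by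
  refine prod_ne_zero_iff.mpr fun j _ h => ?_
  have hnorm : ‖q * q ^ j‖ < 1 := by
    rw [← pow_succ', norm_pow]
    exact pow_lt_one₀ (norm_nonneg q) hq j.succ_ne_zero
  rw [← sub_eq_zero.mp h, norm_one] at hnorm
  exact hnorm.false

section qBinom

variable {q : ℂ} (hq : ∀ n, qPoch q q n ≠ 0)
include hq

theorem qBinom_zero_right (n : ℕ) : qBinom q n 0 = 1 := by
  simp [qBinom, qPoch_zero, hq n]

theorem qBinom_self (n : ℕ) : qBinom q n n = 1 := by
  simp [qBinom, qPoch_zero, hq n]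

theorem qBinom_succ_succ (i d : ℕ) :
    qBinom q (i + d + 2) (i + 1)
      = qBinom q (i + d + 1) (i + 1) + q ^ (d + 1) * qBinom q (i + d + 1) i := by
  rw [qBinom, qBinom, qBinom, show i + d + 2 - (i + 1) = d + 1 by omega,
    show i + d + 1 - (i + 1) = d by omega, show i + d + 1 - i = d + 1 by omega,
    qPoch_self_succ q (i + d + 1), qPoch_self_succ q d, qPoch_self_succ q i]
  obtain ⟨hi, hi'⟩ := mul_ne_zero_iff.mp (qPoch_self_succ q i ▸ hq (i + 1))
  obtain ⟨hd, hd'⟩ := mul_ne_zero_iff.mp (qPoch_self_succ q d ▸ hq (d + 1))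
  have := hq (i + d + 1)
  field_simp
  ring

theorem cauchyP_eq_sum (x y : ℂ) (m : ℕ) :
    cauchyP q x y m
      = ∑ j ∈ range (m + 1),
          qBinom q m j * (-1) ^ j * q ^ j.choose 2 * y ^ j * x ^ (m - j) := by
  induction m with
  | zero => simp [cauchyP, qBinom_zero_right hq]
  | succ m ih =>
    rw [cauchyP_succ, ih, mul_sub, sum_mul, sum_mul]
    -- `qBinom q m (m + 1)` is a junk value, not `0`, so the two boundary terms are split off.
    refine sum_range_sub_sum_range_eq_sum_range_succ _ _ _ m ?_ (fun j hj => ?_) ?_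
    · simp [qBinom_zero_right hq, pow_succ]
    · obtain ⟨d, rfl⟩ := Nat.exists_eq_add_of_lt hj
      rw [show j + d + 1 + 1 = j + d + 2 by ring, qBinom_succ_succ hq j d,
        show j + d + 2 - (j + 1) = d + 1 by omega, show j + d + 1 - j = d + 1 by omega,
        show j + d + 1 - (j + 1) = d by omega]
      simp only [Nat.choose_succ_succ, Nat.choose_one_right, pow_add]
      ring
    · simp only [qBinom_self hq, Nat.sub_self, Nat.choose_succ_succ, Nat.choose_one_right, pow_add]
      ring

theorem qBinom_mul_qBinom_sub (n k j : ℕ) :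
    qBinom q n k * qBinom q (n - k) j
      = qPoch q q n / (qPoch q q k * qPoch q q j * qPoch q q (n - k - j)) := by
  rw [qBinom, qBinom, Nat.sub_sub]
  have := hq (n - k); have := hq k; have := hq j; have := hq (n - (k + j))
  field_simp

theorem qBinom_mul_qBinom_sub_comm (n k j : ℕ) :
    qBinom q n k * qBinom q (n - k) j = qBinom q n j * qBinom q (n - j) k := by
  rw [qBinom_mul_qBinom_sub hq, qBinom_mul_qBinom_sub hq,
    Nat.sub_right_comm, mul_comm (qPoch q q k)]

theorem ascU_eq_sum_sum (x y a : ℂ) (n : ℕ) :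
    ascU q x y a n
      = ∑ k ∈ range (n + 1), ∑ j ∈ range (n - k + 1),
          qBinom q n k * qBinom q (n - k) j *
            ((-1) ^ k * (-1) ^ j * q ^ k.choose 2 * q ^ j.choose 2 *
              a ^ k * y ^ j * x ^ (n - k - j)) := by
  refine sum_congr rfl fun k _ => ?_
  rw [cauchyP_eq_sum hq x y (n - k), mul_sum]
  refine sum_congr rfl fun j _ => ?_
  ring

end qBinom

theorem stmt0_general (q x y a : ℂ) (hq1 : ‖q‖ < 1) (n : ℕ) :
    ascU q x y a n = ascU q x a y n := by
  have hq := qPoch_self_ne_zero hq1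
  rw [ascU_eq_sum_sum hq, ascU_eq_sum_sum hq, sum_range_sum_range_sub_comm]
  refine sum_congr rfl fun j _ => sum_congr rfl fun k _ => ?_
  rw [qBinom_mul_qBinom_sub_comm hq n k j, Nat.sub_right_comm n k j]
  ring

theorem stmt0 (q x y a : ℂ) (hq0 : 0 < ‖q‖) (hq1 : ‖q‖ < 1) (n : ℕ) :
    ascU q x y a n = ascU q x a y n :=
  stmt0_general q x y a hq1 n
end

section
/- The Al-Salam-Carlitz polynomial satisfies the relation U_n(x,y,a;q) = (-1)^n q^{\binom{n}{2}} a^n h_n(y/a, x/a | q^{-1}), where h_n(x,y|q) is the bivariate Rogers-Szegő polynomial, provided a ≠ 0 and q ≠ 0. -/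
open Finset

noncomputable def rsH (q x y : ℂ) (n : ℕ) : ℂ :=
  ∑ k ∈ Finset.range (n + 1), qBinom q n k * cauchyP q x y k


/-! Each factor of the Cauchy polynomial inverts as `x - q^j y = -a q^j (y/a - q^{-j} x/a)`, so
`P_k(x,y|q) = (-1)^k q^{C(k,2)} a^k P_k(y/a,x/a|q^{-1})`. Since `(q;q)_m = P_m(1,q|q)`, the same
identity gives `[n choose k]_q = q^{k(n-k)} [n choose k]_{q^{-1}}`. After reversing the summation
index of `U_n`, the two sums agree term by term because `C(k,2) + C(n-k,2) + k(n-k) = C(n,2)`. -/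

theorem Nat.choose_two_succ (m : ℕ) : (m + 1).choose 2 = m.choose 2 + m := by
  rw [Nat.choose_succ_succ, Nat.choose_one_right, add_comm]

theorem Nat.choose_two_add (i j : ℕ) : (i + j).choose 2 = i.choose 2 + j.choose 2 + i * j := by
  induction j with
  | zero => simp
  | succ j ih =>
    rw [← add_assoc, Nat.choose_two_succ, ih, Nat.choose_two_succ]
    ring

theorem cauchyP_eq_mul_cauchyP_inv {q a : ℂ} (hq : q ≠ 0) (ha : a ≠ 0) (x y : ℂ) (m : ℕ) :
    cauchyP q x y m = (-1) ^ m * q ^ m.choose 2 * a ^ m * cauchyP q⁻¹ (y / a) (x / a) m := by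
  have factor (j : ℕ) : x - q ^ j * y = (-a * q ^ j) * (y / a - q⁻¹ ^ j * (x / a)) := by
    rw [inv_pow]
    field_simp
    ring
  have sum_range : ∑ j ∈ range m, j = m.choose 2 := by
    rw [sum_range_id, Nat.choose_two_right]
  simp only [cauchyP, factor, prod_mul_distrib, prod_const, card_range,
    prod_pow_eq_pow_sum (range m) (fun j => j), sum_range]
  ring

theorem qPoch_self_eq_mul_qPoch_inv {q : ℂ} (hq : q ≠ 0) (m : ℕ) :
    qPoch q q m = (-1) ^ m * q ^ (m + 1).choose 2 * qPoch q⁻¹ q⁻¹ m := by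
  have qPoch_eq_cauchyP (p : ℂ) : qPoch p p m = cauchyP p 1 p m := by
    simp only [qPoch, cauchyP, mul_comm p]
  rw [qPoch_eq_cauchyP, qPoch_eq_cauchyP, cauchyP_eq_mul_cauchyP_inv hq hq, div_self hq,
    one_div, Nat.choose_two_succ, pow_add]
  ring

theorem qBinom_add_symm (q : ℂ) (i j : ℕ) : qBinom q (i + j) j = qBinom q (i + j) i := by
  rw [qBinom, qBinom, Nat.add_sub_cancel, Nat.add_sub_cancel_left, mul_comm]

theorem qBinom_eq_mul_qBinom_inv {q : ℂ} (hq : q ≠ 0) (i j : ℕ) :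
    qBinom q (i + j) i = q ^ (i * j) * qBinom q⁻¹ (i + j) i := by
  have hchoose : (i + j + 1).choose 2 = (i + 1).choose 2 + (j + 1).choose 2 + i * j := by
    rw [add_right_comm, Nat.choose_two_add, Nat.choose_two_succ, Nat.choose_two_succ]
    ring
  rw [qBinom, qBinom, Nat.add_sub_cancel_left, qPoch_self_eq_mul_qPoch_inv hq,
    qPoch_self_eq_mul_qPoch_inv hq, qPoch_self_eq_mul_qPoch_inv hq, hchoose]
  field_simp
  ring

theorem stmt3 (q x y a : ℂ) (hq : q ≠ 0) (ha : a ≠ 0) (n : ℕ) :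
    ascU q x y a n = (-1) ^ n * q ^ Nat.choose n 2 * a ^ n * rsH q⁻¹ (y / a) (x / a) n := by
  rw [ascU, rsH, mul_sum, ← sum_range_reflect]
  refine sum_congr rfl fun k hk => ?_
  obtain ⟨j, rfl⟩ := Nat.exists_eq_add_of_le (Nat.lt_succ_iff.mp (mem_range.mp hk))
  rw [show k + j + 1 - 1 - k = j by omega, Nat.add_sub_cancel, qBinom_add_symm,
    qBinom_eq_mul_qBinom_inv hq, cauchyP_eq_mul_cauchyP_inv hq ha, Nat.choose_two_add]
  ring
end
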